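/- arXiv:math/0506025 — 3 statements merged into one kernel-verified Lean document; each statement's English description precedes it below -/
import Mathlib

section
/- Let X₁ and X₂ be finite subsets of ℂˣ such that the product set X₁·X₂ satisfies the no-cycle property. Then |X₁·X₂| ≥ |X₁| + |X₂| − 1. -/
open Pointwise

/-- A finite set `X ⊆ ℂˣ` fails the no-cycle property if it contains a coset
`u·⟨ζ⟩` of a nontrivial finite cyclic subgroup of `ℂˣ`. -/
def FailsNoCycle (X : Set ℂ) : Prop :=
  ∃ (n : ℕ) (ζ u : ℂ), 2 ≤ n ∧ IsPrimitiveRoot ζ n ∧ u ≠ 0 ∧ ∀ k : ℕ, u * ζ ^ k ∈ X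

namespace StmtAux

open Finset Function Monoid MulOpposite Subgroup

variable {α : Type*} [CommGroup α] [DecidableEq α] {x y : Finset α × Finset α}
  {s t : Finset α}

/-- The DeVos relation. -/
private def DevosMulRel : Finset α × Finset α → Finset α × Finset α → Prop :=
  Prod.Lex (· < ·) (Prod.Lex (· > ·) (· < ·)) on fun x ↦ (#(x.1 * x.2), #x.1 + #x.2, #x.1)

private lemma devosMulRel_iff :
    DevosMulRel x y ↔
      #(x.1 * x.2) < #(y.1 * y.2) ∨
        #(x.1 * x.2) = #(y.1 * y.2) ∧ #y.1 + #y.2 < #x.1 + #x.2 ∨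
          #(x.1 * x.2) = #(y.1 * y.2) ∧ #x.1 + #x.2 = #y.1 + #y.2 ∧ #x.1 < #y.1 := by
  simp [DevosMulRel, Prod.lex_iff, and_or_left]

private lemma devosMulRel_of_le (mul : #(x.1 * x.2) ≤ #(y.1 * y.2))
    (hadd : #y.1 + #y.2 < #x.1 + #x.2) : DevosMulRel x y :=
  devosMulRel_iff.2 <| mul.lt_or_eq.imp_right fun h ↦ Or.inl ⟨h, hadd⟩

private lemma devosMulRel_of_le_of_le (mul : #(x.1 * x.2) ≤ #(y.1 * y.2))
    (hadd : #y.1 + #y.2 ≤ #x.1 + #x.2) (hone : #x.1 < #y.1) : DevosMulRel x y :=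
  devosMulRel_iff.2 <|
    mul.lt_or_eq.imp_right fun h ↦ hadd.lt_or_eq.imp (And.intro h) fun h' ↦ ⟨h, h'.symm, hone⟩

private lemma wellFoundedOn_devosMulRel :
    {x : Finset α × Finset α | x.1.Nonempty ∧ x.2.Nonempty}.WellFoundedOn
      (DevosMulRel : Finset α × Finset α → Finset α × Finset α → Prop) := by
  refine wellFounded_lt.onFun.wellFoundedOn.prod_lex_of_wellFoundedOn_fiber fun n ↦
    Set.WellFoundedOn.prod_lex_of_wellFoundedOn_fiber ?_ fun n ↦
      wellFounded_lt.onFun.wellFoundedOn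
  exact wellFounded_lt.onFun.wellFoundedOn.mono' fun x hx y _ ↦ tsub_lt_tsub_left_of_le <|
    add_le_add ((card_le_card_mul_right hx.1.2).trans_eq hx.2) <|
      (card_le_card_mul_left hx.1.1).trans_eq hx.2

/-- DeVos-style induction: either `s * t` contains a coset of a nontrivial cyclic subgroup,
or the Cauchy-Davenport bound holds. -/
lemma devos_cycle (hs : s.Nonempty) (ht : t.Nonempty) :
    (∃ g a : α, g ≠ 1 ∧ ∀ n : ℤ, a * g ^ n ∈ s * t) ∨ #s + #t - 1 ≤ #(s * t) := by
  set x := (s, t) with hx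
  clear_value x
  simp only [Prod.ext_iff] at hx
  obtain ⟨rfl, rfl⟩ := hx
  refine wellFoundedOn_devosMulRel.induction (P := fun x : Finset α × Finset α ↦
    (∃ g a : α, g ≠ 1 ∧ ∀ n : ℤ, a * g ^ n ∈ x.1 * x.2) ∨ #x.1 + #x.2 - 1 ≤ #(x.1 * x.2))
    ⟨hs, ht⟩ ?_
  clear! x
  rintro ⟨s, t⟩ ⟨hs, ht⟩ ih
  simp only [tsub_le_iff_right, Prod.forall, Set.mem_setOf_eq, and_imp] at *
  -- If `#t < #s`, use the induction hypothesis on `(t⁻¹, s⁻¹)`.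
  obtain hts | hst := lt_or_ge #t #s
  · have hrel : DevosMulRel (t⁻¹, s⁻¹) (s, t) := by
      refine devosMulRel_iff.2 <| Or.inr <| Or.inr ?_
      simp [← mul_inv_rev, add_comm, card_inv, hts]
    obtain H | H := ih t⁻¹ s⁻¹ ht.inv hs.inv hrel
    · obtain ⟨g, a, hg, hmem⟩ := H
      refine Or.inl ⟨g, a⁻¹, hg, fun n ↦ ?_⟩
      have := hmem (-n)
      rw [← mul_inv_rev, Finset.mem_inv'] at this
      simpa [mul_inv, zpow_neg, mul_comm] using this
    · refine Or.inr ?_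
      rw [card_inv, card_inv, ← mul_inv_rev, card_inv, add_comm] at H
      exact H
  -- If `s` is a singleton, the result is trivial.
  obtain ⟨a, rfl⟩ | ⟨a, ha, b, hb, hab⟩ := hs.exists_eq_singleton_or_nontrivial
  · refine Or.inr ?_
    simp [card_singleton_mul, add_comm]
  obtain ⟨g, hg, hgs⟩ : ∃ g : α, g ≠ 1 ∧ (s ∩ op g • s).Nonempty :=
    ⟨b⁻¹ * a, inv_mul_eq_one.not.2 hab.symm, _,
      mem_inter.2 ⟨ha, mem_smul_finset.2 ⟨_, hb, by simp⟩⟩⟩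
  obtain hsg | hsg := eq_or_ne (op g • s) s
  · have hS : (zpowers g : Set α) ⊆ a⁻¹ • (s : Set α) := by
      refine forall_mem_zpowers.2 <| @zpow_induction_right _ _ _ (· ∈ a⁻¹ • (s : Set α))
        ⟨_, ha, inv_mul_cancel _⟩ (fun c hc ↦ ?_) fun c hc ↦ ?_
      · rw [← hsg, coe_smul_finset, smul_comm]
        exact Set.smul_mem_smul_set hc
      · rwa [← op_smul_eq_mul, op_inv, ← Set.mem_smul_set_iff_inv_smul_mem, smul_comm,
          ← coe_smul_finset, hsg]
    obtain ⟨c, hc⟩ := ht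
    refine Or.inl ⟨g, a * c, hg, fun n ↦ ?_⟩
    have hgn : g ^ n ∈ a⁻¹ • (s : Set α) := hS ⟨n, rfl⟩
    obtain ⟨y, hy, hy'⟩ := hgn
    have hy2 : y = a * g ^ n := by
      have h' : a⁻¹ * y = g ^ n := hy'
      rw [← h', mul_inv_cancel_left]
    subst hy2
    have hmm : a * g ^ n * c ∈ s * t := mul_mem_mul hy hc
    have h2 : a * c * g ^ n = a * g ^ n * c := mul_right_comm a c (g ^ n)
    rw [h2]
    exact hmm
  replace hsg : #(s ∩ op g • s) < #s := card_lt_card ⟨inter_subset_left, fun h ↦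
    hsg <| eq_of_superset_of_card_ge (h.trans inter_subset_right) (card_smul_finset _ _).le⟩
  replace aux1 := card_mono <| mulETransformLeft.fst_mul_snd_subset g (s, t)
  replace aux2 := card_mono <| mulETransformRight.fst_mul_snd_subset g (s, t)
  obtain hgt | hgt := disjoint_or_nonempty_inter t (g⁻¹ • t)
  · refine Or.inr ((add_le_add_left hst _).trans ?_)
    have he : #t + #t = #(t ∪ g⁻¹ • t) := by
      rw [card_union_of_disjoint hgt, card_smul_finset]
    rw [he]
    exact le_trans (le_trans (card_le_card_mul_left hgs) aux1) le_self_add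
  obtain hstg | hstg := le_or_lt_of_add_le_add (MulETransform.card g (s, t)).ge
  · obtain H | H := ih _ _ hgs (hgt.mono inter_subset_union)
      (devosMulRel_of_le_of_le aux1 hstg hsg)
    · obtain ⟨g', a', hg', hmem⟩ := H
      exact Or.inl ⟨g', a', hg', fun n ↦ mulETransformLeft.fst_mul_snd_subset g (s, t) (hmem n)⟩
    · exact Or.inr <| hstg.trans <| H.trans <| add_le_add_left aux1 _
  · obtain H | H := ih _ _ (hgs.mono inter_subset_union) hgt (devosMulRel_of_le aux2 hstg)
    · obtain ⟨g', a', hg', hmem⟩ := H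
      exact Or.inl ⟨g', a', hg', fun n ↦ mulETransformRight.fst_mul_snd_subset g (s, t) (hmem n)⟩
    · exact Or.inr <| hstg.le.trans <| H.trans <| add_le_add_left aux2 _

end StmtAux

/-- Multiplicative Kneser-type inequality: if `X₁·X₂` satisfies the no-cycle property,
then `|X₁·X₂| ≥ |X₁| + |X₂| − 1`. -/
theorem stmt7 (X₁ X₂ : Finset ℂ) (h₁0 : (0 : ℂ) ∉ X₁) (h₂0 : (0 : ℂ) ∉ X₂)
    (h₁ : X₁.Nonempty) (h₂ : X₂.Nonempty)
    (h : ¬ FailsNoCycle (↑(X₁ * X₂) : Set ℂ)) :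
    X₁.card + X₂.card - 1 ≤ (X₁ * X₂).card := by
  classical
  -- lift to ℂˣ
  set s : Finset ℂˣ := X₁.preimage Units.val (Units.val_injective.injOn) with hs
  set t : Finset ℂˣ := X₂.preimage Units.val (Units.val_injective.injOn) with ht
  have himg : ∀ (X : Finset ℂ), (0 : ℂ) ∉ X →
      (X.preimage Units.val (Units.val_injective.injOn)).image Units.val = X := by
    intro X hX
    rw [Finset.image_preimage]
    refine Finset.filter_true_of_mem fun x hx ↦ ?_
    have hx0 : x ≠ 0 := fun h ↦ hX (h ▸ hx)
    exact ⟨Units.mk0 x hx0, rfl⟩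
  have hs1 : s.image Units.val = X₁ := himg X₁ h₁0
  have ht1 : t.image Units.val = X₂ := himg X₂ h₂0
  have hmulimg : (s * t).image Units.val = X₁ * X₂ := by
    have himul : (s * t).image (⇑(Units.coeHom ℂ)) =
        s.image (⇑(Units.coeHom ℂ)) * t.image (⇑(Units.coeHom ℂ)) :=
      Finset.image_mul _
    exact himul.trans (by rw [show ⇑(Units.coeHom ℂ) = Units.val from rfl, hs1, ht1])
  have hsne : s.Nonempty := by
    obtain ⟨x, hx⟩ := h₁
    rw [← hs1] at hx
    obtain ⟨u, hu, -⟩ := Finset.mem_image.1 hx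
    exact ⟨u, hu⟩
  have htne : t.Nonempty := by
    obtain ⟨x, hx⟩ := h₂
    rw [← ht1] at hx
    obtain ⟨u, hu, -⟩ := Finset.mem_image.1 hx
    exact ⟨u, hu⟩
  have hcard1 : s.card = X₁.card := by rw [← hs1]; exact (Finset.card_image_of_injective _ Units.val_injective).symm
  have hcard2 : t.card = X₂.card := by rw [← ht1]; exact (Finset.card_image_of_injective _ Units.val_injective).symm
  have hcardm : (s * t).card = (X₁ * X₂).card := by
    rw [← hmulimg]; exact (Finset.card_image_of_injective _ Units.val_injective).symm
  obtain H | H := StmtAux.devos_cycle hsne htne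
  · -- contradiction with no-cycle
    exfalso
    obtain ⟨g, a, hg, hmem⟩ := H
    -- g has finite order since the coset lands in a finite set
    have hfin : IsOfFinOrder g := by
      by_contra hinf
      have hinj : Function.Injective fun n : ℤ ↦ a * g ^ n := fun m n hmn ↦
        (injective_zpow_iff_not_isOfFinOrder.2 hinf) (mul_left_cancel hmn)
      have hfin' : (Set.range fun n : ℤ ↦ a * g ^ n).Finite :=
        (s * t).finite_toSet.subset (by rintro y ⟨n, rfl⟩; exact hmem n)
      exact Set.infinite_range_of_injective hinj hfin'
    set n := orderOf g with hn
    have hn1 : n ≠ 1 := by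
      intro h1
      exact hg (orderOf_eq_one_iff.1 h1)
    have hn0 : n ≠ 0 := by
      simpa [hn, orderOf_eq_zero_iff] using hfin
    have hn2 : 2 ≤ n := by omega
    apply h
    refine ⟨n, (g : ℂ), (a : ℂ), hn2, ?_, Units.ne_zero a, fun k ↦ ?_⟩
    · -- primitive root
      have hord : orderOf (g : ℂ) = n := by
        rw [hn]
        exact orderOf_units
      have : IsPrimitiveRoot (g : ℂ) (orderOf (g : ℂ)) :=
        IsPrimitiveRoot.orderOf (g : ℂ)
      rwa [hord] at this
    · have := hmem (k : ℤ)
      rw [zpow_natCast] at this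
      have h4 : ((a * g ^ k : ℂˣ) : ℂ) ∈ ((s * t).image Units.val : Finset ℂ) :=
        Finset.mem_image_of_mem _ this
      rw [hmulimg] at h4
      have h5 : (a : ℂ) * (g : ℂ) ^ k ∈ X₁ * X₂ := by simpa using h4
      exact Finset.mem_coe.2 h5
  · rw [hcard1, hcard2, hcardm] at H
    exact H
end

section
/- Let λ₁, λ₂, λ₃ ∈ ℂˣ with λ₁ = λ₂ is false, λ₂ ≠ λ₃, λ₁ ≠ λ₃ (all three distinct). If the set {λ₁², λ₂², λ₃², λ₂λ₃, λ₁λ₃, λ₁λ₂} has at most 3 elements, then it fails the no-cycle property or has at least 4 elements; in particular it can never simultaneously have at most 3 elements and satisfy the no-cycle property. -/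
/-- For three distinct nonzero complex numbers, the set of squares and pairwise
products cannot simultaneously have at most 3 elements and satisfy the no-cycle
property. -/
theorem stmt10 (l₁ l₂ l₃ : ℂ) (h₁ : l₁ ≠ 0) (h₂ : l₂ ≠ 0) (h₃ : l₃ ≠ 0)
    (h12 : l₁ ≠ l₂) (h23 : l₂ ≠ l₃) (h13 : l₁ ≠ l₃) :
    ¬ (({l₁ ^ 2, l₂ ^ 2, l₃ ^ 2, l₂ * l₃, l₁ * l₃, l₁ * l₂} : Set ℂ).ncard ≤ 3 ∧
        ¬ FailsNoCycle ({l₁ ^ 2, l₂ ^ 2, l₃ ^ 2, l₂ * l₃, l₁ * l₃, l₁ * l₂} : Set ℂ)) := by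
  rintro ⟨hcard, hnc⟩
  set S : Set ℂ := {l₁ ^ 2, l₂ ^ 2, l₃ ^ 2, l₂ * l₃, l₁ * l₃, l₁ * l₂} with hS
  have hsub : ({l₂ * l₃, l₁ * l₃, l₁ * l₂} : Set ℂ) ⊆ S := by
    intro x hx
    simp only [hS, Set.mem_insert_iff, Set.mem_singleton_iff] at hx ⊢
    tauto
  have hfin : S.Finite := Set.Finite.insert _ (Set.Finite.insert _ (Set.Finite.insert _
    (Set.Finite.insert _ (Set.Finite.insert _ (Set.finite_singleton _)))))
  have hd1 : l₂ * l₃ ≠ l₁ * l₃ := fun h => h12 (mul_right_cancel₀ h₃ h).symm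
  have hd2 : l₂ * l₃ ≠ l₁ * l₂ := by
    intro h
    exact h13 (mul_left_cancel₀ h₂ (by linear_combination h)).symm
  have hd3 : l₁ * l₃ ≠ l₁ * l₂ := fun h => h23 (mul_left_cancel₀ h₁ h).symm
  have h3 : ({l₂ * l₃, l₁ * l₃, l₁ * l₂} : Set ℂ).ncard = 3 := by
    rw [Set.ncard_insert_of_notMem (by simp [hd1, hd2]),
      Set.ncard_insert_of_notMem (by simp [hd3]), Set.ncard_singleton]
  have heq : ({l₂ * l₃, l₁ * l₃, l₁ * l₂} : Set ℂ) = S :=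
    Set.eq_of_subset_of_ncard_le hsub (hcard.trans_eq h3.symm) hfin
  have mem_tri : ∀ x ∈ S, x = l₂ * l₃ ∨ x = l₁ * l₃ ∨ x = l₁ * l₂ := by
    intro x hx
    rw [← heq] at hx
    simpa using hx
  have e1 : l₁ ^ 2 = l₂ * l₃ := by
    rcases mem_tri (l₁ ^ 2) (by simp [hS]) with h | h | h
    · exact h
    · exact absurd (mul_left_cancel₀ h₁ (by linear_combination h)) h13
    · exact absurd (mul_left_cancel₀ h₁ (by linear_combination h)) h12
  have e2 : l₂ ^ 2 = l₁ * l₃ := by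
    rcases mem_tri (l₂ ^ 2) (by simp [hS]) with h | h | h
    · exact absurd (mul_left_cancel₀ h₂ (by linear_combination h)) h23
    · exact h
    · exact absurd (mul_left_cancel₀ h₂ (by linear_combination h)).symm h12
  have hcube : l₂ ^ 3 = l₁ ^ 3 := by linear_combination l₂ * e2 - l₁ * e1
  set ζ : ℂ := l₂ / l₁ with hζ
  have hz3 : ζ ^ 3 = 1 := by
    rw [hζ, div_pow, hcube, div_self (pow_ne_zero 3 h₁)]
  have hzne : ζ ≠ 1 := by
    rw [hζ, Ne, div_eq_one_iff_eq h₁]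
    exact fun h => h12 h.symm
  have hord : orderOf ζ = 3 := by
    rcases Nat.prime_three.eq_one_or_self_of_dvd _ (orderOf_dvd_of_pow_eq_one hz3) with h | h
    · exact absurd (orderOf_eq_one_iff.mp h) hzne
    · exact h
  have hprim : IsPrimitiveRoot ζ 3 := hord ▸ IsPrimitiveRoot.orderOf ζ
  refine hnc ⟨3, ζ, l₁ ^ 2, by norm_num, hprim, pow_ne_zero 2 h₁, fun k => ?_⟩
  rw [pow_eq_pow_mod k hz3]
  have hk : k % 3 < 3 := Nat.mod_lt _ (by norm_num)
  interval_cases h : k % 3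
  · simp [hS]
  · have : l₁ ^ 2 * ζ ^ 1 = l₁ * l₂ := by
      rw [hζ]; field_simp
    rw [this]
    simp [hS]
  · have : l₁ ^ 2 * ζ ^ 2 = l₂ ^ 2 := by
      rw [hζ]; field_simp
    rw [this]
    simp [hS]
end

section
/- Let λ ∈ ℂˣ with λ³ ≠ 1, and let ω be any primitive cube root of unity (ω³ = 1, ω ≠ 1). Then neither the set {λ⁻³, 1, λ³, ωλ, ωλ⁻²} nor the set {λ², λ⁻¹, λ⁻⁴, ωλ, ωλ⁻²} can simultaneously have at most 3 distinct elements and satisfy the no-cycle property. -/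
lemma aux_cyc2 {X : Set ℂ} {x : ℂ} (hx : x ≠ 0) (h1 : x ∈ X) (h2 : -x ∈ X) :
    FailsNoCycle X := by
  refine ⟨2, -1, x, le_refl 2, IsPrimitiveRoot.neg_one 0 (by norm_num), hx, fun k => ?_⟩
  rcases Nat.even_or_odd k with h | h
  · rw [h.neg_one_pow, mul_one]; exact h1
  · rw [h.neg_one_pow, mul_neg_one]; exact h2

lemma aux_four {X : Set ℂ} (hX : X.Finite) {x1 x2 x3 x4 : ℂ}
    (m1 : x1 ∈ X) (m2 : x2 ∈ X) (m3 : x3 ∈ X) (m4 : x4 ∈ X)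
    (h12 : x1 ≠ x2) (h13 : x1 ≠ x3) (h14 : x1 ≠ x4)
    (h23 : x2 ≠ x3) (h24 : x2 ≠ x4) (h34 : x3 ≠ x4) : 4 ≤ X.ncard := by
  have hsub : ({x1, x2, x3, x4} : Set ℂ) ⊆ X := by
    intro y hy
    rcases hy with rfl | rfl | rfl | rfl <;> assumption
  have hc : ({x1, x2, x3, x4} : Set ℂ).ncard = 4 := by
    rw [Set.ncard_insert_of_notMem (by simp [h12, h13, h14]),
        Set.ncard_insert_of_notMem (by simp [h23, h24]),
        Set.ncard_pair h34]
  calc 4 = ({x1, x2, x3, x4} : Set ℂ).ncard := hc.symm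
    _ ≤ X.ncard := Set.ncard_le_ncard hsub hX

lemma aux_cube3 {ω a b : ℂ} (hω : ω ^ 3 = 1) (h : ω * a = b) : a ^ 3 = b ^ 3 := by
  calc a ^ 3 = ω ^ 3 * a ^ 3 := by rw [hω, one_mul]
    _ = (ω * a) ^ 3 := by ring
    _ = b ^ 3 := by rw [h]

/-- For `λ ∈ ℂˣ` with `λ³ ≠ 1` and `ω` a primitive cube root of unity, neither
`{λ⁻³, 1, λ³, ωλ, ωλ⁻²}` nor `{λ², λ⁻¹, λ⁻⁴, ωλ, ωλ⁻²}` can simultaneously have at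
most 3 elements and satisfy the no-cycle property. -/
theorem stmt11 (l ω : ℂ) (hl : l ≠ 0) (hl3 : l ^ 3 ≠ 1)
    (hω : ω ^ 3 = 1) (hω1 : ω ≠ 1) :
    (¬ (({l ^ (-3 : ℤ), 1, l ^ (3 : ℤ), ω * l, ω * l ^ (-2 : ℤ)} : Set ℂ).ncard ≤ 3 ∧
        ¬ FailsNoCycle ({l ^ (-3 : ℤ), 1, l ^ (3 : ℤ), ω * l, ω * l ^ (-2 : ℤ)} : Set ℂ))) ∧
    (¬ (({l ^ (2 : ℤ), l ^ (-1 : ℤ), l ^ (-4 : ℤ), ω * l, ω * l ^ (-2 : ℤ)} : Set ℂ).ncard ≤ 3 ∧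
        ¬ FailsNoCycle ({l ^ (2 : ℤ), l ^ (-1 : ℤ), l ^ (-4 : ℤ), ω * l, ω * l ^ (-2 : ℤ)} : Set ℂ))) := by
  have z3 : l ^ (-3 : ℤ) = (l ^ 3)⁻¹ := by
    rw [zpow_neg, show ((3:ℤ) = (3:ℕ)) from rfl, zpow_natCast]
  have z2 : l ^ (-2 : ℤ) = (l ^ 2)⁻¹ := by
    rw [zpow_neg, show ((2:ℤ) = (2:ℕ)) from rfl, zpow_natCast]
  have z4 : l ^ (-4 : ℤ) = (l ^ 4)⁻¹ := by
    rw [zpow_neg, show ((4:ℤ) = (4:ℕ)) from rfl, zpow_natCast]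
  have z1 : l ^ (-1 : ℤ) = l⁻¹ := by rw [zpow_neg, zpow_one]
  have zp3 : l ^ (3 : ℤ) = l ^ 3 := by
    rw [show ((3:ℤ) = (3:ℕ)) from rfl, zpow_natCast]
  have zp2 : l ^ (2 : ℤ) = l ^ 2 := by
    rw [show ((2:ℤ) = (2:ℕ)) from rfl, zpow_natCast]
  rw [z3, z2, z4, z1, zp3, zp2]
  have hω0 : ω ≠ 0 := by intro h; rw [h] at hω; norm_num at hω
  constructor
  · rintro ⟨hcard, hfail⟩
    by_cases h6 : l ^ 6 = 1
    · -- l^3 = -1, so {1, -1} ⊆ X gives a 2-cycle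
      have hm1 : l ^ 3 = -1 := by
        have h0 : (l ^ 3 - 1) * (l ^ 3 + 1) = 0 := by linear_combination h6
        rcases mul_eq_zero.mp h0 with h | h
        · exact absurd (by linear_combination h) hl3
        · linear_combination h
      refine hfail (aux_cyc2 one_ne_zero (by simp) ?_)
      simp only [Set.mem_insert_iff, Set.mem_singleton_iff]
      exact Or.inr (Or.inr (Or.inl (by rw [hm1])))
    · -- the set has at least 4 elements
      have hfin : ({(l^3)⁻¹, 1, l^3, ω*l, ω*(l^2)⁻¹} : Set ℂ).Finite :=
        (Set.finite_singleton _).insert _ |>.insert _ |>.insert _ |>.insert _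
      have hl3' : (l:ℂ) ^ 3 ≠ 0 := pow_ne_zero _ hl
      have hab : ((l^3)⁻¹ : ℂ) ≠ 1 := fun h => hl3 (inv_eq_one.mp h)
      have hac : ((l^3)⁻¹ : ℂ) ≠ l^3 := by
        intro h; apply h6
        field_simp at h
        first | linear_combination h | linear_combination -h
      have hbc : (1:ℂ) ≠ l^3 := fun h => hl3 h.symm
      have hdb : ω * l ≠ 1 := by
        intro h; apply hl3
        have := aux_cube3 hω h
        linear_combination this
      have hdc : ω * l ≠ l^3 := by
        intro h; apply h6
        have hc := aux_cube3 hω h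
        have : l^3 * l^6 = l^3 * 1 := by linear_combination -hc
        exact mul_left_cancel₀ hl3' this
      by_cases hda : ω * l = (l^3)⁻¹
      · -- then ωλ⁻² differs from all of a, b, c
        have h' : ω * l^4 = 1 := by
          field_simp at hda
          first | linear_combination hda | linear_combination -hda
        have h12 : l^12 = 1 := by
          have := aux_cube3 hω h'
          linear_combination this
        have hea : ω * (l^2)⁻¹ ≠ (l^3)⁻¹ := by
          intro h; apply hl3
          have h' : ω * l^3 = l^2 := by
            field_simp at h
            linear_combination l^2 * h
          have hc := aux_cube3 hω h'
          have : l^6 * l^3 = l^6 * 1 := by linear_combination hc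
          exact mul_left_cancel₀ (pow_ne_zero 6 hl) this
        have heb : ω * (l^2)⁻¹ ≠ 1 := by
          intro h; apply h6
          have h' : ω * 1 = l^2 := by
            field_simp at h
            first | linear_combination h | linear_combination -h
          have hc := aux_cube3 hω h'
          linear_combination -hc
        have hec : ω * (l^2)⁻¹ ≠ l^3 := by
          intro h; apply hl3
          have h' : ω * 1 = l^5 := by
            field_simp at h
            first | linear_combination h | linear_combination -h
          have hc := aux_cube3 hω h'
          have h15 : l^15 = 1 := by linear_combination -hc
          have : l^12 * l^3 = l^12 * 1 := by linear_combination h15 - h12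
          exact mul_left_cancel₀ (pow_ne_zero 12 hl) this
        have h4 := aux_four hfin (x1 := (l^3)⁻¹) (x2 := 1) (x3 := l^3) (x4 := ω*(l^2)⁻¹)
          (by simp) (by simp) (by simp) (by simp)
          hab hac (fun h => hea h.symm) hbc (fun h => heb h.symm) (fun h => hec h.symm)
        omega
      · have h4 := aux_four hfin (x1 := (l^3)⁻¹) (x2 := 1) (x3 := l^3) (x4 := ω*l)
          (by simp) (by simp) (by simp) (by simp)
          hab hac (fun h => hda h.symm) hbc (fun h => hdb h.symm) (fun h => hdc h.symm)
        omega
  · rintro ⟨hcard, hfail⟩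
    by_cases h6 : l ^ 6 = 1
    · have hm1 : l ^ 3 = -1 := by
        have h0 : (l ^ 3 - 1) * (l ^ 3 + 1) = 0 := by linear_combination h6
        rcases mul_eq_zero.mp h0 with h | h
        · exact absurd (by linear_combination h) hl3
        · linear_combination h
      have hinv : l⁻¹ = -(l^2) := by
        field_simp
        first | linear_combination hm1 | linear_combination -hm1
      refine hfail (aux_cyc2 (x := l^2) (pow_ne_zero _ hl) (by simp) ?_)
      simp only [Set.mem_insert_iff, Set.mem_singleton_iff]
      exact Or.inr (Or.inl hinv.symm)
    · have hfin : ({l^2, l⁻¹, (l^4)⁻¹, ω*l, ω*(l^2)⁻¹} : Set ℂ).Finite :=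
        (Set.finite_singleton _).insert _ |>.insert _ |>.insert _ |>.insert _
      have hab : (l^2 : ℂ) ≠ l⁻¹ := by
        intro h; apply hl3
        field_simp at h
        first | linear_combination h | linear_combination -h
      have hac : (l^2 : ℂ) ≠ (l^4)⁻¹ := by
        intro h; apply h6
        field_simp at h
        first | linear_combination h | linear_combination -h
      have hbc : (l⁻¹ : ℂ) ≠ (l^4)⁻¹ := by
        intro h; apply hl3
        have h' : l * l^3 = l * 1 := by
          field_simp at h
          linear_combination l * h
        exact mul_left_cancel₀ hl h'
      have hda : ω * l ≠ l^2 := by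
        intro h; apply hl3
        have h' : ω = l := mul_right_cancel₀ hl (by linear_combination h)
        rw [← h']; exact hω
      have hdb : ω * l ≠ l⁻¹ := by
        intro h; apply h6
        have h' : ω * l^2 = 1 := by
          field_simp at h
          first | linear_combination h | linear_combination -h
        have hc := aux_cube3 hω h'
        linear_combination hc
      by_cases hdc : ω * l = (l^4)⁻¹
      · have h' : ω * l^5 = 1 := by
          field_simp at hdc
          first | linear_combination hdc | linear_combination -hdc
        have h15 : l^15 = 1 := by
          have := aux_cube3 hω h'
          linear_combination this
        have hea : ω * (l^2)⁻¹ ≠ l^2 := by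
          intro h; apply hl3
          have h' : ω * 1 = l^4 := by
            field_simp at h
            first | linear_combination h | linear_combination -h
          have hc := aux_cube3 hω h'
          have h12 : l^12 = 1 := by linear_combination -hc
          have : l^12 * l^3 = l^12 * 1 := by linear_combination h15 - h12
          exact mul_left_cancel₀ (pow_ne_zero 12 hl) this
        have heb : ω * (l^2)⁻¹ ≠ l⁻¹ := by
          intro h; apply hl3
          have h' : ω = l := by
            have h2 : ω * l = l * l := by
              field_simp at h
              linear_combination l * h
            exact mul_right_cancel₀ hl (by linear_combination h2)
          rw [← h']; exact hω
        have hec : ω * (l^2)⁻¹ ≠ (l^4)⁻¹ := by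
          intro h; apply h6
          have h' : ω * l^2 = 1 := by
            have h2 : ω * l^4 = l^2 := by
              field_simp at h
              linear_combination l^2 * h
            have : l^2 * (ω * l^2) = l^2 * 1 := by linear_combination h2
            exact mul_left_cancel₀ (pow_ne_zero 2 hl) this
          have hc := aux_cube3 hω h'
          linear_combination hc
        have h4 := aux_four hfin (x1 := l^2) (x2 := l⁻¹) (x3 := (l^4)⁻¹) (x4 := ω*(l^2)⁻¹)
          (by simp) (by simp) (by simp) (by simp)
          hab hac (fun h => hea h.symm) hbc (fun h => heb h.symm) (fun h => hec h.symm)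
        omega
      · have h4 := aux_four hfin (x1 := l^2) (x2 := l⁻¹) (x3 := (l^4)⁻¹) (x4 := ω*l)
          (by simp) (by simp) (by simp) (by simp)
          hab hac (fun h => hda h.symm) hbc (fun h => hdb h.symm) (fun h => hdc h.symm)
        omega
end
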